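/- For every abelian group G, every sequence in G^# that converges to a point of G^# is eventually constant; that is, the only convergent sequences in G^# are the trivial ones. -/

import Mathlib

open scoped Pointwise

/-- The Bohr topology on an abelian group `G`: the initial topology induced by the
family of all group homomorphisms from `G` to the circle group `ℝ/ℤ`. -/
noncomputable def bohrTopology (G : Type*) [AddCommGroup G] : TopologicalSpace G :=
  ⨅ χ : G →+ AddCircle (1 : ℝ), TopologicalSpace.induced χ inferInstance

/-!
If `u n → x` in `G^#`, then `χ (u n - x) → 0` for every character `χ : G → ℝ/ℤ`. The characters
form a compact group `Ĝ` (a closed subgroup of `G → ℝ/ℤ`). Integrating `χ ↦ e(χ (u n - x))`,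
where `e(t) = exp(2πit)`, against the Haar probability measure of `Ĝ`, dominated convergence
makes these integrals tend to `1`. On the other hand, for `g ≠ 0` some character `ψ` has
`ψ g ≠ 0` (characters into `ℚ/ℤ ⊆ ℝ/ℤ` already separate points), and translating by `ψ` shows
that `∫ e(χ g) dχ = e(ψ g) ∫ e(χ g) dχ` vanishes. Hence `u n = x` eventually.
-/

open Filter MeasureTheory Topology

namespace AddCircle

noncomputable def ratCastHom : AddCircle (1 : ℚ) →+ AddCircle (1 : ℝ) :=
  QuotientAddGroup.map _ _ (Rat.castHom ℝ).toAddMonoidHom <|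
    AddSubgroup.zmultiples_le_of_mem ⟨1, by simp⟩

theorem ratCastHom_injective : Function.Injective ratCastHom := by
  refine (injective_iff_map_eq_zero _).2 fun x hx => ?_
  obtain ⟨q, rfl⟩ := QuotientAddGroup.mk_surjective x
  change ((q : ℝ) : AddCircle (1 : ℝ)) = 0 at hx
  obtain ⟨n, hn⟩ := (AddCircle.coe_eq_zero_iff 1).1 hx
  refine (AddCircle.coe_eq_zero_iff 1).2 ⟨n, ?_⟩
  simp only [zsmul_eq_mul, mul_one] at hn ⊢
  exact_mod_cast hn

end AddCircle

theorem AddMonoidHom.exists_addCircle_apply_ne_zero {A : Type*} [AddCommGroup A] {a : A}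
    (ha : a ≠ 0) : ∃ χ : A →+ AddCircle (1 : ℝ), χ a ≠ 0 := by
  obtain ⟨c, hc⟩ := CharacterModule.exists_character_apply_ne_zero_of_ne_zero ha
  exact ⟨AddCircle.ratCastHom.comp c, (map_ne_zero_iff _ AddCircle.ratCastHom_injective).2 hc⟩

section

variable (A : Type*) [AddCommGroup A]

def addCircleDual : AddSubgroup (A → AddCircle (1 : ℝ)) := (AddMonoidHom.coeFn A _).range

instance : CompactSpace (addCircleDual A) :=
  isCompact_iff_compactSpace.1 (AddMonoidHom.isClosed_range_coe A (AddCircle (1 : ℝ))).isCompact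

noncomputable instance : MeasurableSpace (addCircleDual A) := borel _
instance : BorelSpace (addCircleDual A) := ⟨rfl⟩

end

namespace addCircleDual

variable (A : Type*) [AddCommGroup A]

noncomputable def haar : Measure (addCircleDual A) := Measure.addHaarMeasure ⊤

instance : (haar A).IsAddHaarMeasure := by
  unfold haar; infer_instance

instance : IsProbabilityMeasure (haar A) := ⟨Measure.addHaarMeasure_self⟩

variable {A}

noncomputable def evalCircle (a : A) (χ : addCircleDual A) : ℂ :=
  AddCircle.toCircle (χ.1 a)

theorem evalCircle_add (a : A) (χ ψ : addCircleDual A) :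
    evalCircle a (χ + ψ) = evalCircle a χ * evalCircle a ψ := by
  simp [evalCircle, AddCircle.toCircle_add]

theorem continuous_evalCircle (a : A) : Continuous (evalCircle a) :=
  continuous_subtype_val.comp <| AddCircle.continuous_toCircle.comp <|
    (continuous_apply a).comp continuous_subtype_val

theorem norm_evalCircle (a : A) (χ : addCircleDual A) : ‖evalCircle a χ‖ = 1 :=
  Circle.norm_coe _

theorem exists_evalCircle_ne_one {a : A} (ha : a ≠ 0) : ∃ χ, evalCircle a χ ≠ 1 := by
  obtain ⟨χ, hχ⟩ := AddMonoidHom.exists_addCircle_apply_ne_zero ha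
  refine ⟨⟨χ, χ, rfl⟩, fun h => hχ <| AddCircle.injective_toCircle one_ne_zero ?_⟩
  ext
  simpa [evalCircle] using h

theorem integral_evalCircle_eq_zero {a : A} (ha : a ≠ 0) : ∫ χ, evalCircle a χ ∂haar A = 0 := by
  obtain ⟨ψ, hψ⟩ := exists_evalCircle_ne_one ha
  have h := integral_add_left_eq_self (μ := haar A) (evalCircle a) ψ
  simp only [evalCircle_add, integral_const_mul] at h
  by_contra hI
  exact hψ ((mul_eq_right₀ hI).1 h)

theorem tendsto_integral_evalCircle {ι : Type*} {l : Filter ι} [l.IsCountablyGenerated]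
    {g : ι → A} (hg : ∀ χ : A →+ AddCircle (1 : ℝ), Tendsto (fun i => χ (g i)) l (𝓝 0)) :
    Tendsto (fun i => ∫ χ, evalCircle (g i) χ ∂haar A) l (𝓝 1) := by
  have hlim : ∀ χ : addCircleDual A, Tendsto (fun i => evalCircle (g i) χ) l (𝓝 1) := by
    rintro ⟨_, χ, rfl⟩
    have hc : Continuous fun x : AddCircle (1 : ℝ) => (AddCircle.toCircle x : ℂ) :=
      continuous_subtype_val.comp AddCircle.continuous_toCircle
    simpa [evalCircle, Function.comp_def] using (hc.tendsto 0).comp (hg χ)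
  simpa using tendsto_integral_filter_of_dominated_convergence (μ := haar A) (fun _ => (1 : ℝ))
    (Eventually.of_forall fun i => (continuous_evalCircle (g i)).aestronglyMeasurable)
    (Eventually.of_forall fun i => Eventually.of_forall fun χ => (norm_evalCircle _ _).le)
    (integrable_const _) (Eventually.of_forall hlim)

end addCircleDual

theorem continuous_addMonoidHom_bohrTopology {G : Type*} [AddCommGroup G]
    (χ : G →+ AddCircle (1 : ℝ)) : Continuous[bohrTopology G, _] χ :=
  continuous_iff_le_induced.2 (iInf_le _ χ)

/-- For every abelian group `G`, every convergent sequence in `G^#` is eventually constant. -/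
theorem bohr_convergent_seq_eventually_const (G : Type*) [AddCommGroup G] :
    letI := bohrTopology G
    ∀ (u : ℕ → G) (x : G), Filter.Tendsto u Filter.atTop (nhds x) →
      ∀ᶠ n in Filter.atTop, u n = x := by
  let := bohrTopology G
  intro u x hu
  have hchar (χ : G →+ AddCircle (1 : ℝ)) : Tendsto (fun n => χ (u n - x)) atTop (𝓝 0) := by
    simpa using (((continuous_addMonoidHom_bohrTopology χ).tendsto x).comp hu).sub_const (χ x)
  filter_upwards [(addCircleDual.tendsto_integral_evalCircle hchar).eventually_ne one_ne_zero]
    with n hn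
  by_contra hne
  exact hn (addCircleDual.integral_evalCircle_eq_zero (sub_ne_zero.2 hne))
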